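/- Let A : ℝ_+ → ℝ^{n×n} be continuous, with entries a_{ij}(t), and suppose there exists η > 0 such that for every column index ℓ ∈ [1,n] and every t ≥ 0, Σ_{i≠ℓ} ( |a_{iℓ}(t)| + a_{ii}(t) ) ≤ −η. Then μ_∞(A^{[n−1]}(t)) ≤ −η for all t ≥ 0, and consequently the LTV system ẋ(t) = A(t)x(t) is (n−1)-order contractive with respect to the L_∞ norm: for any a^1, …, a^{n−1} ∈ ℝ^n and all t ≥ 0, | x(t,a^1) ∧ ⋯ ∧ x(t,a^{n−1}) |_∞ ≤ e^{−ηt} | a^1 ∧ ⋯ ∧ a^{n−1} |_∞, where x(t,a) is the solution with x(0) = a. -/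

import Mathlib

open Matrix Set Filter
open scoped ENNReal

noncomputable section

/-- Increasing `k`-element subsets of `Fin n` (row/column index type of compounds). -/
abbrev IdxK (n k : ℕ) := {s : Finset (Fin n) // s.card = k}

/-- The `k`-th multiplicative compound of a matrix: the matrix of all `k × k` minors,
indexed by `k`-element subsets of row/column indices (ordered increasingly). -/
noncomputable def mulCompound {n m : ℕ} (k : ℕ) (A : Matrix (Fin n) (Fin m) ℝ) :
    Matrix (IdxK n k) (IdxK m k) ℝ := fun κ lam =>
  (Matrix.of fun i j : Fin k =>
    A (κ.1.orderIsoOfFin κ.2 i).1 (lam.1.orderIsoOfFin lam.2 j).1).det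

/-- The `k`-th additive compound: derivative at `ε = 0` of `ε ↦ (I + εA)^{(k)}`. -/
noncomputable def addCompound {n : ℕ} (k : ℕ) (A : Matrix (Fin n) (Fin n) ℝ) :
    Matrix (IdxK n k) (IdxK n k) ℝ := fun κ lam =>
  deriv (fun ε : ℝ => mulCompound k ((1 : Matrix (Fin n) (Fin n) ℝ) + ε • A) κ lam) 0

/-- Wedge product of `k` vectors in `ℝ^n`, as the `k`-th multiplicative compound of the
`n × k` matrix whose columns are the given vectors. -/
noncomputable def wedge {n k : ℕ} (u : Fin k → (Fin n → ℝ)) : IdxK n k → ℝ := fun κ =>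
  mulCompound k (Matrix.of fun i j => u j i) κ ⟨Finset.univ, by simp⟩

/-- `N` is a norm on `ι → ℝ`. -/
structure IsNorm {ι : Type*} [Fintype ι] (N : (ι → ℝ) → ℝ) : Prop where
  nonneg : ∀ x, 0 ≤ N x
  eq_zero_iff : ∀ x, N x = 0 ↔ x = 0
  triangle : ∀ x y, N (x + y) ≤ N x + N y
  homog : ∀ (c : ℝ) (x), N (c • x) = |c| * N x

/-- Operator norm of a matrix induced by the vector norm `N`. -/
noncomputable def inducedNorm {ι : Type*} [Fintype ι] (N : (ι → ℝ) → ℝ)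
    (M : Matrix ι ι ℝ) : ℝ :=
  sSup {c : ℝ | ∃ x : ι → ℝ, N x = 1 ∧ c = N (M.mulVec x)}

/-- Matrix measure (logarithmic norm) induced by the vector norm `N`:
`μ(M) = lim_{ε→0⁺} (‖I + εM‖ - 1)/ε`, i.e. the one-sided derivative at `0`. -/
noncomputable def matMeasure {ι : Type*} [Fintype ι] [DecidableEq ι] (N : (ι → ℝ) → ℝ)
    (M : Matrix ι ι ℝ) : ℝ :=
  derivWithin (fun ε : ℝ => inducedNorm N ((1 : Matrix ι ι ℝ) + ε • M)) (Set.Ici 0) 0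

/-- The `L_p` norm on `ι → ℝ` for `p ∈ [1,∞]` (`p = ⊤` is the sup norm). -/
noncomputable def lpnorm {ι : Type*} [Fintype ι] (p : ℝ≥0∞) (x : ι → ℝ) : ℝ :=
  if p = ⊤ then ⨆ i, |x i| else (∑ i, |x i| ^ p.toReal) ^ (1 / p.toReal)

/-!
For `k = n - 1` the `k`-subsets of `Fin n` are the complements `{p}ᶜ`, and a minor of order
`n - 1` is a signed entry of the adjugate. Differentiating
`adj (I + εA) · (I + εA) = det (I + εA) · I` at `ε = 0` gives
`A^{[n-1]}({p}ᶜ, {q}ᶜ) = (-1)^(p+q) (δ_{qp} tr A - a_{qp})`. So the row of `A^{[n-1]}` at `{p}ᶜ`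
has diagonal entry `Σ_{i≠p} a_{ii}` and off-diagonal entries `±a_{qp}`, `q ≠ p`, and the
hypothesis says exactly that `μ_∞(A^{[n-1]}) ≤ -η`; here
`μ_∞(M) = max_i (m_{ii} + Σ_{j≠i} |m_{ij}|)` because `‖I + εM‖_∞ = 1 + ε μ_∞(M)` for small
`ε ≥ 0`.

Expanding `det [x_1; …; x_{n-1}; e_p]` along its last row gives `±(x_1 ∧ ⋯ ∧ x_{n-1})_{{p}ᶜ}`,
and Jacobi's formula then shows that `w = x_1 ∧ ⋯ ∧ x_{n-1}` solves `ẇ = A^{[n-1]} w`. Along such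
a solution the right Dini derivative of `‖w‖_∞` is at most `μ_∞(A^{[n-1]}) ‖w‖_∞ ≤ -η ‖w‖_∞`,
and Grönwall's inequality gives the decay `e^{-ηt}`.
-/

open scoped Topology

section Determinant

variable {ι : Type*}

theorem hasDerivAt_add_smul_apply (B A : Matrix ι ι ℝ) (i j : ι) :
    HasDerivAt (fun ε : ℝ => (B + ε • A) i j) (A i j) 0 := by
  simpa using ((hasDerivAt_id (0 : ℝ)).mul_const (A i j)).const_add (B i j)

variable [Fintype ι] [DecidableEq ι]

theorem det_eq_sum_perm_prod_row (M : Matrix ι ι ℝ) :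
    M.det = ∑ σ : Equiv.Perm ι, (Equiv.Perm.sign σ : ℝ) * ∏ i, M i (σ i) := by
  rw [← det_transpose, det_apply']
  rfl

theorem hasDerivWithinAt_det {M : ℝ → Matrix ι ι ℝ} {M' : Matrix ι ι ℝ} {s : Set ℝ} {t : ℝ}
    (h : ∀ i j, HasDerivWithinAt (fun t => M t i j) (M' i j) s t) :
    HasDerivWithinAt (fun t => (M t).det) (∑ i, ((M t).updateRow i (M' i)).det) s t := by
  simp_rw [det_eq_sum_perm_prod_row]
  refine (HasDerivWithinAt.fun_sum fun σ _ =>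
    (HasDerivWithinAt.fun_finsetProd fun i _ => h i (σ i)).const_mul (Equiv.Perm.sign σ : ℝ)
    ).congr_deriv ?_
  rw [Finset.sum_comm]
  refine Finset.sum_congr rfl fun σ _ => ?_
  rw [Finset.mul_sum]
  refine Finset.sum_congr rfl fun k _ => ?_
  rw [← Finset.mul_prod_erase _ _ (Finset.mem_univ k), smul_eq_mul]
  simp only [updateRow_self]
  have hrest : ∏ i ∈ Finset.univ.erase k, (M t).updateRow k (M' k) i (σ i) =
      ∏ i ∈ Finset.univ.erase k, M t i (σ i) :=
    Finset.prod_congr rfl fun i hi => by rw [updateRow_ne (Finset.ne_of_mem_erase hi)]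
  rw [hrest]
  ring

theorem det_one_updateRow (i : ι) (v : ι → ℝ) : ((1 : Matrix ι ι ℝ).updateRow i v).det = v i := by
  have hv : ∑ k, v k • (1 : Matrix ι ι ℝ) k = v := by
    ext j
    simp [Matrix.one_apply]
  simpa [hv] using det_updateRow_sum (1 : Matrix ι ι ℝ) i v

theorem hasDerivAt_det_add_smul (B A : Matrix ι ι ℝ) :
    HasDerivAt (fun ε : ℝ => (B + ε • A).det) (∑ i, (B.updateRow i (A i)).det) 0 := by
  simpa using hasDerivWithinAt_univ.1
    (hasDerivWithinAt_det fun i j => (hasDerivAt_add_smul_apply B A i j).hasDerivWithinAt)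

theorem hasDerivAt_det_one_add_smul (A : Matrix ι ι ℝ) :
    HasDerivAt (fun ε : ℝ => (1 + ε • A).det) A.trace 0 := by
  refine (hasDerivAt_det_add_smul 1 A).congr_deriv ?_
  simp [det_one_updateRow, trace]

theorem sum_det_updateRow_mulVec (B A : Matrix ι ι ℝ) :
    ∑ i, (B.updateRow i (A *ᵥ B i)).det = A.trace * B.det := by
  have hfac : ∀ ε : ℝ, B + ε • (B * Aᵀ) = B * (1 + ε • Aᵀ) := fun ε => by
    rw [Matrix.mul_add, Matrix.mul_one, Matrix.mul_smul]
  have hrow : ∀ i, (B * Aᵀ) i = A *ᵥ B i := fun i => by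
    ext k
    simp [Matrix.mul_apply, Matrix.mulVec, dotProduct, mul_comm]
  have h₁ := hasDerivAt_det_add_smul B (B * Aᵀ)
  have h₂ := (hasDerivAt_det_one_add_smul Aᵀ).const_mul B.det
  simp_rw [hfac, det_mul] at h₁
  calc ∑ i, (B.updateRow i (A *ᵥ B i)).det = ∑ i, (B.updateRow i ((B * Aᵀ) i)).det := by
        simp_rw [hrow]
    _ = B.det * Aᵀ.trace := h₁.unique h₂
    _ = A.trace * B.det := by rw [trace_transpose, mul_comm]

theorem hasDerivAt_adjugate_one_add_smul (A : Matrix ι ι ℝ) (i j : ι) :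
    HasDerivAt (fun ε : ℝ => adjugate (1 + ε • A) i j)
      ((if i = j then A.trace else 0) - A i j) 0 := by
  -- Only differentiability is needed here: the value follows from `adj B * B = det B • 1`.
  have hadj : ∀ k l, ∃ d, HasDerivAt (fun ε : ℝ => adjugate (1 + ε • A) k l) d 0 := by
    intro k l
    simp_rw [adjugate_apply]
    refine ⟨_, hasDerivWithinAt_univ.1 (hasDerivWithinAt_det (M' := A.updateRow l 0) fun a b => ?_)⟩
    rcases eq_or_ne a l with rfl | ha
    · simp only [updateRow_self, Pi.zero_apply]
      exact hasDerivWithinAt_const _ _ _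
    · simp only [updateRow_ne ha]
      exact (hasDerivAt_add_smul_apply 1 A a b).hasDerivWithinAt
  choose D hD using hadj
  have hprod : HasDerivAt (fun ε : ℝ => (adjugate (1 + ε • A) * (1 + ε • A) : Matrix ι ι ℝ) i j)
      (D i j + A i j) 0 := by
    simp only [mul_apply]
    refine (HasDerivAt.fun_sum fun r _ => (hD i r).mul (hasDerivAt_add_smul_apply 1 A r j))
      |>.congr_deriv ?_
    simp [one_apply, Finset.sum_add_distrib]
  have hscalar : HasDerivAt (fun ε : ℝ => (adjugate (1 + ε • A) * (1 + ε • A) : Matrix ι ι ℝ) i j)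
      (A.trace * (1 : Matrix ι ι ℝ) i j) 0 := by
    simp_rw [adjugate_mul, Matrix.smul_apply, smul_eq_mul]
    exact (hasDerivAt_det_one_add_smul A).mul_const _
  have hD_eq := hprod.unique hscalar
  refine (hD i j).congr_deriv ?_
  rw [one_apply] at hD_eq
  split_ifs at hD_eq ⊢ <;> linarith

end Determinant

theorem frequently_slope_norm_lt {E : Type*} [NormedAddCommGroup E] [NormedSpace ℝ E]
    {z : ℝ → E} {v : E} {s c r : ℝ} (hz : HasDerivWithinAt z v (Set.Ioi s) s)
    (hv : ∀ᶠ u in 𝓝[>] s, ‖z s + (u - s) • v‖ ≤ (1 + (u - s) * c) * ‖z s‖)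
    (hr : c * ‖z s‖ < r) :
    ∃ᶠ u in 𝓝[>] s, (u - s)⁻¹ * (‖z u‖ - ‖z s‖) < r := by
  set ε := (r - c * ‖z s‖) / 2
  have hε : 0 < ε := by simp only [ε]; linarith
  have hslope : ∀ᶠ u in 𝓝[>] s, ‖slope z s u - v‖ < ε := by
    simpa only [dist_eq_norm] using
      ((hasDerivWithinAt_iff_tendsto_slope' Set.self_notMem_Ioi).1 hz).eventually
        (Metric.ball_mem_nhds v hε)
  refine (Filter.Eventually.frequently ?_)
  filter_upwards [self_mem_nhdsWithin, hv, hslope] with u (hu : s < u) hvu hsu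
  have hpos : 0 < u - s := sub_pos.2 hu
  have hzu : z u = (z s + (u - s) • v) + (u - s) • (slope z s u - v) := by
    rw [smul_sub, add_add_sub_cancel, add_comm, ← vadd_eq_add, sub_smul_slope_vadd]
  have hbound : ‖z u‖ ≤ (1 + (u - s) * c) * ‖z s‖ + (u - s) * ε := by
    rw [hzu]
    refine (norm_add_le _ _).trans (add_le_add hvu ?_)
    rw [norm_smul, Real.norm_of_nonneg hpos.le]
    exact mul_le_mul_of_nonneg_left hsu.le hpos.le
  have hgap : (u - s) * (c * ‖z s‖ + ε) < (u - s) * r := by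
    gcongr
    simp only [ε]
    linarith
  rw [inv_mul_lt_iff₀ hpos]
  linarith

section LinftyNorm

attribute [local instance] Matrix.linftyOpNormedAddCommGroup Matrix.linftyOpNormedSpace

variable {ι : Type*} [Fintype ι]

theorem lpnorm_top_eq_norm (x : ι → ℝ) : lpnorm ⊤ x = ‖x‖ := by
  rw [lpnorm, if_pos rfl]
  refine le_antisymm (Real.iSup_le (fun i => ?_) (norm_nonneg x)) ?_
  · simpa using norm_le_pi_norm x i
  · exact (pi_norm_le_iff_of_nonneg (Real.iSup_nonneg fun i => abs_nonneg _)).2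
      fun i => le_ciSup (f := fun i => |x i|) (Finite.bddAbove_range _) i

theorem inducedNorm_lpnorm_top (M : Matrix ι ι ℝ) : inducedNorm (lpnorm ⊤) M = ‖M‖ := by
  rw [Matrix.linfty_opNorm_eq_opNorm, ← ContinuousLinearMap.sSup_sphere_eq_norm, inducedNorm]
  congr 1
  ext c
  simp [lpnorm_top_eq_norm, eq_comm]

theorem linfty_opNorm_eq_sup' [Nonempty ι] (M : Matrix ι ι ℝ) :
    ‖M‖ = Finset.univ.sup' Finset.univ_nonempty fun i => ∑ j, |M i j| := by
  rw [Matrix.linfty_opNorm_def, ← Finset.sup'_eq_sup Finset.univ_nonempty,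
    Finset.apply_sup'_eq_sup'_comp _ _ NNReal.coe_max]
  simp [Function.comp_def]

variable [DecidableEq ι]

def linftyLogNorm [Nonempty ι] (M : Matrix ι ι ℝ) : ℝ :=
  Finset.univ.sup' Finset.univ_nonempty fun i => M i i + ∑ j ∈ Finset.univ.erase i, |M i j|

theorem linftyLogNorm_le_iff [Nonempty ι] {M : Matrix ι ι ℝ} {b : ℝ} :
    linftyLogNorm M ≤ b ↔ ∀ i, M i i + ∑ j ∈ Finset.univ.erase i, |M i j| ≤ b := by
  simp [linftyLogNorm]

theorem sum_abs_one_add_smul_apply {M : Matrix ι ι ℝ} {h : ℝ} (hh : 0 ≤ h) {i : ι}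
    (hi : h * |M i i| ≤ 1) :
    ∑ j, |(1 + h • M) i j| = 1 + h * (M i i + ∑ j ∈ Finset.univ.erase i, |M i j|) := by
  rw [← Finset.add_sum_erase _ _ (Finset.mem_univ i)]
  have hdiag : |(1 + h • M) i i| = 1 + h * M i i := by
    rw [Matrix.add_apply, Matrix.one_apply_eq, Matrix.smul_apply, smul_eq_mul, abs_of_nonneg]
    nlinarith [neg_abs_le (M i i)]
  have hoff : ∀ j ∈ Finset.univ.erase i, |(1 + h • M) i j| = h * |M i j| := fun j hj => by
    rw [Matrix.add_apply, Matrix.one_apply_ne (Finset.ne_of_mem_erase hj).symm, zero_add,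
      Matrix.smul_apply, smul_eq_mul, abs_mul, abs_of_nonneg hh]
  rw [hdiag, Finset.sum_congr rfl hoff, ← Finset.mul_sum]
  ring

theorem linfty_opNorm_one_add_smul [Nonempty ι] {M : Matrix ι ι ℝ} {h : ℝ} (hh : 0 ≤ h)
    (hM : ∀ i, h * |M i i| ≤ 1) : ‖1 + h • M‖ = 1 + h * linftyLogNorm M := by
  rw [linfty_opNorm_eq_sup', linftyLogNorm, Finset.apply_sup'_eq_sup'_comp _ (fun x => 1 + h * x)
    fun a b => by rw [mul_max_of_nonneg _ _ hh, max_add_add_left]]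
  exact Finset.sup'_congr _ rfl fun i _ => sum_abs_one_add_smul_apply hh (hM i)

theorem eventually_linfty_opNorm_one_add_smul [Nonempty ι] (M : Matrix ι ι ℝ) :
    ∀ᶠ h in 𝓝[≥] 0, ‖1 + h • M‖ = 1 + h * linftyLogNorm M := by
  have hsmall : ∀ᶠ h in 𝓝[≥] (0 : ℝ), ∀ i, h * |M i i| < 1 := by
    refine eventually_nhdsWithin_of_eventually_nhds (Filter.eventually_all.2 fun i => ?_)
    exact (continuous_mul_const |M i i|).continuousAt.eventually_lt continuousAt_const (by simp)
  filter_upwards [self_mem_nhdsWithin, hsmall] with h hh hM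
  exact linfty_opNorm_one_add_smul hh fun i => (hM i).le

theorem matMeasure_lpnorm_top [Nonempty ι] (M : Matrix ι ι ℝ) :
    matMeasure (lpnorm ⊤) M = linftyLogNorm M := by
  have hlin : HasDerivWithinAt (fun h : ℝ => 1 + h * linftyLogNorm M) (linftyLogNorm M)
      (Set.Ici 0) 0 := by
    simpa using ((hasDerivWithinAt_id (0:ℝ) (Set.Ici 0)).mul_const (linftyLogNorm M)).const_add 1
  refine (hlin.congr_of_eventuallyEq ?_ ?_).derivWithin (uniqueDiffOn_Ici 0 0 Set.self_mem_Ici)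
  · filter_upwards [eventually_linfty_opNorm_one_add_smul M] with h hh
    rw [inducedNorm_lpnorm_top, hh]
  · simp [inducedNorm_lpnorm_top]

theorem norm_le_exp_mul_of_linftyLogNorm_le [Nonempty ι] {N : ℝ → Matrix ι ι ℝ}
    {z : ℝ → ι → ℝ} {K : ℝ}
    (hz : ∀ t ∈ Set.Ici (0 : ℝ), HasDerivWithinAt z (N t *ᵥ z t) (Set.Ici 0) t)
    (hN : ∀ t ∈ Set.Ici (0 : ℝ), linftyLogNorm (N t) ≤ K) :
    ∀ t ∈ Set.Ici (0 : ℝ), ‖z t‖ ≤ Real.exp (K * t) * ‖z 0‖ := by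
  intro t ht
  have hcont : ContinuousOn (fun s => ‖z s‖) (Set.Icc 0 t) := fun s hs =>
    ((hz s hs.1).continuousWithinAt.mono Set.Icc_subset_Ici_self).norm
  have hdini : ∀ s ∈ Set.Ico 0 t, ∀ r, K * ‖z s‖ < r →
      ∃ᶠ u in 𝓝[>] s, (u - s)⁻¹ * (‖z u‖ - ‖z s‖) < r := by
    intro s hs r hr
    have hshift : Filter.Tendsto (fun u => u - s) (𝓝[>] s) (𝓝[≥] 0) := by
      refine tendsto_nhdsWithin_of_tendsto_nhds_of_eventually_within _ ?_ ?_
      · simpa using ((continuous_sub_right s).tendsto s).mono_left nhdsWithin_le_nhds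
      · filter_upwards [self_mem_nhdsWithin] with u (hu : s < u)
        exact sub_nonneg.2 hu.le
    refine frequently_slope_norm_lt ((hz s hs.1).mono fun u (hu : s < u) => hs.1.trans hu.le)
      ?_ hr
    filter_upwards [hshift.eventually (eventually_linfty_opNorm_one_add_smul (N s)),
      hshift.eventually self_mem_nhdsWithin] with u hnorm (hu : 0 ≤ u - s)
    calc ‖z s + (u - s) • (N s *ᵥ z s)‖ = ‖(1 + (u - s) • N s) *ᵥ z s‖ := by
          rw [Matrix.add_mulVec, Matrix.one_mulVec, Matrix.smul_mulVec]
      _ ≤ ‖1 + (u - s) • N s‖ * ‖z s‖ := Matrix.linfty_opNorm_mulVec _ _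
      _ ≤ (1 + (u - s) * K) * ‖z s‖ := by
          rw [hnorm]
          gcongr
          exact hN s hs.1
  have hgronwall := le_gronwallBound_of_liminf_deriv_right_le hcont hdini le_rfl
    (fun s _ => le_of_eq (add_zero _).symm) t ⟨ht, le_rfl⟩
  rwa [gronwallBound_ε0, sub_zero, mul_comm] at hgronwall

end LinftyNorm

theorem Finset.orderEmbOfFin_univ_fin {m : ℕ} (h : (Finset.univ : Finset (Fin m)).card = m)
    (i : Fin m) : Finset.univ.orderEmbOfFin h i = i :=
  congrFun (Finset.orderEmbOfFin_unique h (fun j => Finset.mem_univ j) strictMono_id).symm i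

namespace IdxK

variable {m : ℕ}

def erase (p : Fin (m + 1)) : IdxK (m + 1) m := ⟨Finset.univ.erase p, by simp⟩

instance : Nonempty (IdxK (m + 1) m) := ⟨erase 0⟩

theorem erase_injective : Function.Injective (erase (m := m)) := by
  intro p q h
  by_contra hpq
  have hp : p ∈ (erase q).1 := Finset.mem_erase.2 ⟨hpq, Finset.mem_univ p⟩
  rw [← h] at hp
  exact Finset.notMem_erase p _ hp

theorem erase_surjective : Function.Surjective (erase (m := m)) := by
  rintro ⟨s, hs⟩
  obtain ⟨p, hp⟩ := Finset.card_eq_one.1 (by rw [Finset.card_compl, hs]; simp : sᶜ.card = 1)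
  refine ⟨p, Subtype.ext (show Finset.univ.erase p = s from ?_)⟩
  rw [← Finset.compl_singleton, ← hp, compl_compl]

def eraseEquiv : Fin (m + 1) ≃ IdxK (m + 1) m :=
  Equiv.ofBijective erase ⟨erase_injective, erase_surjective⟩

@[simp]
theorem eraseEquiv_apply (p : Fin (m + 1)) : eraseEquiv p = erase p := rfl

theorem sum_erase_erase {f : IdxK (m + 1) m → ℝ} (p : Fin (m + 1)) :
    ∑ κ ∈ Finset.univ.erase (erase p), f κ = ∑ q ∈ Finset.univ.erase p, f (erase q) := by
  have h := Finset.map_erase eraseEquiv.toEmbedding Finset.univ p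
  rw [Finset.map_univ_equiv] at h
  exact (h ▸ Finset.sum_map _ _ f :)

theorem orderEmbOfFin_erase (p : Fin (m + 1)) (h : (erase p).1.card = m) (i : Fin m) :
    (erase p).1.orderEmbOfFin h i = p.succAbove i :=
  congrFun (Finset.orderEmbOfFin_unique h
    (fun j => Finset.mem_erase.2 ⟨Fin.succAbove_ne p j, Finset.mem_univ _⟩)
    (Fin.strictMono_succAbove p)).symm i

end IdxK

open IdxK

section Compound

variable {m : ℕ}

theorem mulCompound_erase_erase (M : Matrix (Fin (m + 1)) (Fin (m + 1)) ℝ)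
    (p q : Fin (m + 1)) :
    mulCompound m M (erase p) (erase q) = (-1) ^ (p + q : ℕ) * adjugate M q p := by
  rw [adjugate_fin_succ_eq_det_submatrix, ← mul_assoc, ← mul_pow, neg_one_mul, neg_neg, one_pow,
    one_mul, mulCompound]
  congr 1
  ext i j
  simp [orderEmbOfFin_erase]

theorem addCompound_erase_erase (A : Matrix (Fin (m + 1)) (Fin (m + 1)) ℝ)
    (p q : Fin (m + 1)) :
    addCompound m A (erase p) (erase q) =
      (-1) ^ (p + q : ℕ) * ((if q = p then A.trace else 0) - A q p) := by
  simp_rw [addCompound, mulCompound_erase_erase]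
  exact ((hasDerivAt_adjugate_one_add_smul A q p).const_mul _).deriv

theorem addCompound_rowSum_erase (A : Matrix (Fin (m + 1)) (Fin (m + 1)) ℝ)
    (p : Fin (m + 1)) :
    addCompound m A (erase p) (erase p) +
        ∑ κ ∈ Finset.univ.erase (erase p), |addCompound m A (erase p) κ| =
      ∑ i ∈ Finset.univ.erase p, (|A i p| + A i i) := by
  have hdiag : addCompound m A (erase p) (erase p) = ∑ i ∈ Finset.univ.erase p, A i i := by
    rw [addCompound_erase_erase, if_pos rfl, Finset.sum_erase_eq_sub (Finset.mem_univ p),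
      (Even.add_self _).neg_one_pow, one_mul]
    rfl
  have hoff : ∀ q ∈ Finset.univ.erase p, |addCompound m A (erase p) (erase q)| = |A q p| :=
    fun q hq => by
      rw [addCompound_erase_erase, if_neg (Finset.ne_of_mem_erase hq), zero_sub, abs_mul, abs_pow,
        abs_neg, abs_one, one_pow, one_mul, abs_neg]
  rw [hdiag, sum_erase_erase, Finset.sum_congr rfl hoff, ← Finset.sum_add_distrib]
  exact Finset.sum_congr rfl fun i _ => add_comm _ _

theorem linftyLogNorm_addCompound_le {A : Matrix (Fin (m + 1)) (Fin (m + 1)) ℝ} {b : ℝ}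
    (hcol : ∀ l, ∑ i ∈ Finset.univ.erase l, (|A i l| + A i i) ≤ b) :
    linftyLogNorm (addCompound m A) ≤ b := by
  refine linftyLogNorm_le_iff.2 fun κ => ?_
  obtain ⟨p, rfl⟩ := erase_surjective κ
  exact (addCompound_rowSum_erase A p).le.trans (hcol p)

end Compound

section Wedge

variable {m : ℕ}

theorem wedge_erase (u : Fin m → Fin (m + 1) → ℝ) (p : Fin (m + 1)) :
    wedge u (erase p) = (Matrix.of fun i j => u i (p.succAbove j)).det := by
  rw [wedge, mulCompound, ← det_transpose]
  congr 1
  ext i j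
  simp [orderEmbOfFin_erase, Finset.orderEmbOfFin_univ_fin]

theorem det_snoc (u : Fin m → Fin (m + 1) → ℝ) (v : Fin (m + 1) → ℝ) :
    (Matrix.of (Fin.snoc u v)).det =
      ∑ p : Fin (m + 1), (-1) ^ (m + p : ℕ) * v p * wedge u (erase p) := by
  rw [det_succ_row _ (Fin.last m)]
  refine Fintype.sum_congr _ _ fun p => ?_
  rw [wedge_erase]
  congr 2
  · simp
  · ext i j
    simp [Fin.succAbove_last]

theorem det_snoc_single (u : Fin m → Fin (m + 1) → ℝ) (p : Fin (m + 1)) :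
    (Matrix.of (Fin.snoc u (Pi.single p 1))).det = (-1) ^ (m + p : ℕ) * wedge u (erase p) := by
  rw [det_snoc, Fintype.sum_eq_single p fun q hq => by simp [Pi.single_eq_of_ne hq],
    Pi.single_eq_same, mul_one]

theorem wedge_erase_eq_det_snoc_single (u : Fin m → Fin (m + 1) → ℝ) (p : Fin (m + 1)) :
    wedge u (erase p) = (-1) ^ (m + p : ℕ) * (Matrix.of (Fin.snoc u (Pi.single p 1))).det := by
  rw [det_snoc_single, ← mul_assoc, ← mul_pow, neg_one_mul, neg_neg, one_pow, one_mul]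

theorem hasDerivWithinAt_det_snoc {A : Matrix (Fin (m + 1)) (Fin (m + 1)) ℝ}
    {x : Fin m → ℝ → Fin (m + 1) → ℝ} {s : Set ℝ} {t : ℝ}
    (hx : ∀ i, HasDerivWithinAt (x i) (A *ᵥ x i t) s t) (v : Fin (m + 1) → ℝ) :
    HasDerivWithinAt (fun t => (Matrix.of (Fin.snoc (fun i => x i t) v)).det)
      (A.trace * (Matrix.of (Fin.snoc (fun i => x i t) v)).det -
        (Matrix.of (Fin.snoc (fun i => x i t) (A *ᵥ v))).det) s t := by
  set B := Matrix.of (Fin.snoc (fun i => x i t) v)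
  have hB : ∀ w, B.updateRow (Fin.last m) w = Matrix.of (Fin.snoc (fun i => x i t) w) :=
    fun w => by
      change Matrix.of (Function.update (Fin.snoc (fun i => x i t) v) (Fin.last m) w) = _
      rw [Fin.update_snoc_last]
  refine (hasDerivWithinAt_det (M' := Matrix.of (Fin.snoc (fun i => A *ᵥ x i t) 0))
    fun i j => ?_).congr_deriv ?_
  · induction i using Fin.lastCases with
    | last => simpa using hasDerivWithinAt_const t s (v j)
    | cast i => simpa using hasDerivWithinAt_pi.1 (hx i) j
  · rw [← sum_det_updateRow_mulVec B A, Fin.sum_univ_castSucc, Fin.sum_univ_castSucc, hB, hB]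
    have hzero : (Matrix.of (Fin.snoc (fun i => x i t) (0 : Fin (m + 1) → ℝ))).det = 0 :=
      det_eq_zero_of_row_eq_zero (Fin.last m) fun j => by simp
    have hof : ∀ (f : Fin (m + 1) → Fin (m + 1) → ℝ) i, Matrix.of f i = f i := fun _ _ => rfl
    simp only [B, hof, Fin.snoc_castSucc, Fin.snoc_last, hzero]
    ring

theorem hasDerivWithinAt_wedge {A : Matrix (Fin (m + 1)) (Fin (m + 1)) ℝ}
    {x : Fin m → ℝ → Fin (m + 1) → ℝ} {s : Set ℝ} {t : ℝ}
    (hx : ∀ i, HasDerivWithinAt (x i) (A *ᵥ x i t) s t) :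
    HasDerivWithinAt (fun t => wedge fun i => x i t)
      (addCompound m A *ᵥ wedge fun i => x i t) s t := by
  refine hasDerivWithinAt_pi.2 fun κ => ?_
  obtain ⟨p, rfl⟩ := erase_surjective κ
  set w := wedge fun i => x i t
  have hsign : ∀ q : Fin (m + 1),
      (-1 : ℝ) ^ (m + p : ℕ) * (-1) ^ (m + q : ℕ) = (-1) ^ (p + q : ℕ) := fun q => by
      rw [← pow_add, show m + p + (m + q : ℕ) = 2 * m + (p + q) by ring, pow_add, pow_mul,
        neg_one_sq, one_pow, one_mul]
  simp_rw [wedge_erase_eq_det_snoc_single]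
  refine ((hasDerivWithinAt_det_snoc hx _).const_mul _).congr_deriv ?_
  rw [det_snoc_single, det_snoc, mulVec, dotProduct, ← eraseEquiv.sum_comp]
  simp only [eraseEquiv_apply, addCompound_erase_erase, mulVec_single_one, col_apply]
  have hsq : (-1 : ℝ) ^ (m + p : ℕ) * (-1) ^ (m + p : ℕ) = 1 := by
    rw [hsign, (Even.add_self _).neg_one_pow]
  calc (-1) ^ (m + p : ℕ) * (A.trace * ((-1) ^ (m + p : ℕ) * w (erase p)) -
        ∑ q : Fin (m + 1), (-1) ^ (m + q : ℕ) * A q p * w (erase q))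
      = A.trace * w (erase p) - ∑ q : Fin (m + 1), (-1) ^ (p + q : ℕ) * A q p * w (erase q) := by
        rw [mul_sub, Finset.mul_sum]
        congr 1
        · linear_combination A.trace * w (erase p) * hsq
        · refine Finset.sum_congr rfl fun q _ => ?_
          rw [← hsign q]
          ring
    _ = _ := by
        simp only [mul_sub, sub_mul, Finset.sum_sub_distrib, mul_ite, mul_zero, ite_mul, zero_mul,
          Finset.sum_ite_eq', Finset.mem_univ, if_true, (Even.add_self _).neg_one_pow, one_mul]

end Wedge

theorem pred_order_contraction_general {n : ℕ} (hn : 1 ≤ n)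
    (A : ℝ → Matrix (Fin n) (Fin n) ℝ)
    (η : ℝ)
    (hcol : ∀ t ∈ Set.Ici (0 : ℝ), ∀ l : Fin n,
      ∑ i ∈ Finset.univ.erase l, (|A t i l| + A t i i) ≤ -η) :
    (∀ t ∈ Set.Ici (0 : ℝ), matMeasure (lpnorm ⊤) (addCompound (n - 1) (A t)) ≤ -η) ∧
    (∀ (a : Fin (n - 1) → (Fin n → ℝ)) (x : Fin (n - 1) → ℝ → (Fin n → ℝ)),
      (∀ i, x i 0 = a i) →
      (∀ i, ∀ t ∈ Set.Ici (0 : ℝ),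
        HasDerivWithinAt (x i) ((A t).mulVec (x i t)) (Set.Ici 0) t) →
      ∀ t ∈ Set.Ici (0 : ℝ),
        lpnorm ⊤ (wedge fun i => x i t) ≤
          Real.exp (-η * t) * lpnorm ⊤ (wedge a)) := by
  obtain ⟨m, rfl⟩ : ∃ m, n = m + 1 := ⟨n - 1, by omega⟩
  have hlog : ∀ t ∈ Set.Ici (0 : ℝ), linftyLogNorm (addCompound m (A t)) ≤ -η :=
    fun t ht => linftyLogNorm_addCompound_le (hcol t ht)
  refine ⟨fun t ht => (matMeasure_lpnorm_top (ι := IdxK (m + 1) m) _).trans_le (hlog t ht), ?_⟩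
  intro a x hx0 hx t ht
  rw [lpnorm_top_eq_norm, lpnorm_top_eq_norm, ← funext hx0]
  exact norm_le_exp_mul_of_linftyLogNorm_le
    (fun s hs => hasDerivWithinAt_wedge fun i => hx i s hs) hlog t ht

/-- if `Σ_{i≠ℓ}(|a_{iℓ}(t)| + a_{ii}(t)) ≤ -η` for every column `ℓ` and all
`t ≥ 0`, then `μ_∞(A^{[n-1]}(t)) ≤ -η`, and the LTV system `ẋ = A(t)x` is
`(n-1)`-order contractive w.r.t. the `L_∞` norm. -/
theorem pred_order_contraction {n : ℕ} (hn : 1 ≤ n)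
    (A : ℝ → Matrix (Fin n) (Fin n) ℝ)
    (hcont : ∀ i j : Fin n, ContinuousOn (fun t => A t i j) (Set.Ici 0))
    (η : ℝ) (hη : 0 < η)
    (hcol : ∀ t ∈ Set.Ici (0 : ℝ), ∀ l : Fin n,
      ∑ i ∈ Finset.univ.erase l, (|A t i l| + A t i i) ≤ -η) :
    (∀ t ∈ Set.Ici (0 : ℝ), matMeasure (lpnorm ⊤) (addCompound (n - 1) (A t)) ≤ -η) ∧
    (∀ (a : Fin (n - 1) → (Fin n → ℝ)) (x : Fin (n - 1) → ℝ → (Fin n → ℝ)),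
      (∀ i, x i 0 = a i) →
      (∀ i, ∀ t ∈ Set.Ici (0 : ℝ),
        HasDerivWithinAt (x i) ((A t).mulVec (x i t)) (Set.Ici 0) t) →
      ∀ t ∈ Set.Ici (0 : ℝ),
        lpnorm ⊤ (wedge fun i => x i t) ≤
          Real.exp (-η * t) * lpnorm ⊤ (wedge a)) :=
  pred_order_contraction_general hn A η hcol

end
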